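/- arXiv:1703.08311 — 3 statements merged into one kernel-verified Lean document; each statement's English description precedes it below -/
import Mathlib

section
/- For a switched discrete-time linear system η_{k+1} = A_{σ(k)} η_k with modes A_1,…,A_N, if there exist positive definite matrices P_1,…,P_N and a Metzler-type matrix Π with nonnegative entries π_{ij} ≥ 0 and columns summing to one (∑_i π_{ij} = 1 for all j) such that A_jᵀ(∑_i π_{ij} P_i) A_j − P_j ≺ 0 for all j, then the switching policy σ(k) = argmin_i η_kᵀ P_i η_k makes the origin globally asymptotically stable. -/
/-!
The Lyapunov function is `V(η) = min_i ηᵀ P_i η`, which is exactly `ηᵀ P_σ η` along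
the min-switching trajectory. Since a minimum is at most any convex combination, one step
from mode `j` gives `V(η⁺) ≤ ∑_i π_ij η⁺ᵀ P_i η⁺ = ηᵀ A_jᵀ (∑_i π_ij P_i) A_j η`,
and the Lyapunov–Metzler inequality makes this smaller than `V(η) - ε |η|²` with `ε`
uniform in `j`. Telescoping shows `∑_k |η_k|² ≤ V(η_0) / ε`, so `η_k → 0`.
-/

open Matrix Filter

def NegDef {ι : Type*} [Fintype ι] (M : Matrix ι ι ℝ) : Prop := (-M).PosDef

open Topology
open scoped MatrixOrder

section QuadraticForms

variable {m ι : Type*} [Fintype m]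

theorem Matrix.PosDef.exists_pos_mul_dotProduct_self_le [DecidableEq m] {G : Matrix m m ℝ}
    (hG : G.PosDef) : ∃ ε > 0, ∀ x : m → ℝ, ε * (x ⬝ᵥ x) ≤ x ⬝ᵥ (G *ᵥ x) := by
  cases isEmpty_or_nonempty m
  · exact ⟨1, one_pos, fun x => by simp [Subsingleton.elim x 0]⟩
  -- positive spectrum gives `ε • 1 ≤ G` in the Loewner order
  obtain ⟨ε, hε, hle⟩ := (CFC.exists_pos_algebraMap_le_iff hG.isHermitian).2
    fun _ hx => hG.isStrictlyPositive.spectrum_pos hx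
  refine ⟨ε, hε, fun x => ?_⟩
  have := (Matrix.le_iff.1 hle).dotProduct_mulVec_nonneg x
  simpa [sub_mulVec, algebraMap_eq_diagonal, Pi.algebraMap_def, dotProduct_smul] using this

theorem Matrix.exists_pos_forall_mul_dotProduct_self_le [DecidableEq m] [Finite ι]
    {G : ι → Matrix m m ℝ} (hG : ∀ j, (G j).PosDef) :
    ∃ ε > 0, ∀ j, ∀ x : m → ℝ, ε * (x ⬝ᵥ x) ≤ x ⬝ᵥ (G j *ᵥ x) := by
  have hsmall : ∀ j, ∀ᶠ ε in 𝓝[>] (0 : ℝ),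
      ∀ x : m → ℝ, ε * (x ⬝ᵥ x) ≤ x ⬝ᵥ (G j *ᵥ x) := by
    intro j
    obtain ⟨ε, hε, hεle⟩ := (hG j).exists_pos_mul_dotProduct_self_le
    filter_upwards [Ioc_mem_nhdsGT hε] with δ hδ x
    exact (mul_le_mul_of_nonneg_right hδ.2 (dotProduct_self_star_nonneg x)).trans (hεle x)
  obtain ⟨ε, hεle, hε⟩ := ((eventually_all.2 hsmall).and self_mem_nhdsWithin).exists
  exact ⟨ε, hε, hεle⟩

theorem Matrix.dotProduct_sum_smul_mulVec [Fintype ι] (w : ι → ℝ) (P : ι → Matrix m m ℝ)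
    (x : m → ℝ) :
    x ⬝ᵥ ((∑ i, w i • P i) *ᵥ x) = ∑ i, w i * (x ⬝ᵥ (P i *ᵥ x)) := by
  simp [sum_mulVec, dotProduct_sum, smul_mulVec, dotProduct_smul]

theorem Matrix.mulVec_dotProduct_mulVec_mulVec (A S : Matrix m m ℝ) (x : m → ℝ) :
    (A *ᵥ x) ⬝ᵥ (S *ᵥ (A *ᵥ x)) = x ⬝ᵥ ((Aᵀ * S * A) *ᵥ x) := by
  rw [dotProduct_mulVec x, ← vecMul_vecMul, ← vecMul_vecMul, vecMul_transpose,
    ← dotProduct_mulVec, ← dotProduct_mulVec]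

theorem Matrix.dotProduct_mulVec_le_sum_smul_of_isMin [Fintype ι] {P : ι → Matrix m m ℝ}
    {w : ι → ℝ} (hw : ∀ i, 0 ≤ w i) (hw1 : ∑ i, w i = 1) {s : ι} {y : m → ℝ}
    (hs : ∀ i, y ⬝ᵥ (P s *ᵥ y) ≤ y ⬝ᵥ (P i *ᵥ y)) :
    y ⬝ᵥ (P s *ᵥ y) ≤ y ⬝ᵥ ((∑ i, w i • P i) *ᵥ y) := by
  calc y ⬝ᵥ (P s *ᵥ y) = ∑ i, w i * (y ⬝ᵥ (P s *ᵥ y)) := by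
        rw [← Finset.sum_mul, hw1, one_mul]
    _ ≤ ∑ i, w i * (y ⬝ᵥ (P i *ᵥ y)) :=
      Finset.sum_le_sum fun i _ => mul_le_mul_of_nonneg_left (hs i) (hw i)
    _ = y ⬝ᵥ ((∑ i, w i • P i) *ᵥ y) := (dotProduct_sum_smul_mulVec w P y).symm

theorem tendsto_zero_of_dotProduct_self_tendsto_zero {x : ℕ → m → ℝ}
    (hx : Tendsto (fun k => x k ⬝ᵥ x k) atTop (𝓝 0)) : Tendsto x atTop (𝓝 0) := by
  have hsqrt : Tendsto (fun k => √(x k ⬝ᵥ x k)) atTop (𝓝 0) := by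
    simpa [Function.comp_def] using (Real.continuous_sqrt.tendsto 0).comp hx
  refine squeeze_zero_norm (fun k => ?_) hsqrt
  refine (pi_norm_le_iff_of_nonneg (Real.sqrt_nonneg _)).2 fun a => ?_
  rw [Real.norm_eq_abs]
  refine Real.abs_le_sqrt ?_
  rw [sq]
  exact Finset.single_le_sum (fun i _ => mul_self_nonneg (x k i)) (Finset.mem_univ a)

end QuadraticForms

theorem tendsto_zero_of_add_le_of_nonneg {V q : ℕ → ℝ} (hV : ∀ k, 0 ≤ V k)
    (hq : ∀ k, 0 ≤ q k) (hdecr : ∀ k, V (k + 1) + q k ≤ V k) :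
    Tendsto q atTop (𝓝 0) := by
  have htel : ∀ K, ∑ k ∈ Finset.range K, q k + V K ≤ V 0 := by
    intro K
    induction K with
    | zero => simp
    | succ K ih => rw [Finset.sum_range_succ]; linarith [hdecr K]
  exact (summable_of_sum_range_le hq fun K => by linarith [htel K, hV K]).tendsto_atTop_zero

/-- Lyapunov–Metzler stability: the min-switching policy makes the origin
globally asymptotically stable. -/
theorem stmt0 {n N : ℕ} (A P : Fin N → Matrix (Fin n) (Fin n) ℝ)
    (hP : ∀ i, (P i).PosDef) (Pm : Fin N → Fin N → ℝ)
    (hπ : ∀ i j, 0 ≤ Pm i j) (hcol : ∀ j, ∑ i, Pm i j = 1)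
    (hLM : ∀ j, NegDef ((A j)ᵀ * (∑ i, Pm i j • P i) * A j - P j))
    (η : ℕ → Fin n → ℝ) (σ : ℕ → Fin N)
    (hσ : ∀ k i, η k ⬝ᵥ ((P (σ k)) *ᵥ η k) ≤ η k ⬝ᵥ ((P i) *ᵥ η k))
    (hdyn : ∀ k, η (k + 1) = (A (σ k)) *ᵥ η k) :
    Tendsto η atTop (nhds 0) := by
  set S : Fin N → Matrix (Fin n) (Fin n) ℝ := fun j => ∑ i, Pm i j • P i
  have hgap : ∀ j, (P j - (A j)ᵀ * S j * A j).PosDef := fun j => by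
    simpa only [NegDef, neg_sub] using hLM j
  obtain ⟨ε, hε, hεle⟩ := exists_pos_forall_mul_dotProduct_self_le hgap
  set V : ℕ → ℝ := fun k => η k ⬝ᵥ (P (σ k) *ᵥ η k)
  have hV : ∀ k, 0 ≤ V k := fun k => by
    simpa using (hP (σ k)).posSemidef.dotProduct_mulVec_nonneg (η k)
  have hdecr : ∀ k, V (k + 1) + ε * (η k ⬝ᵥ η k) ≤ V k := fun k => by
    have hstep : V (k + 1) ≤ η k ⬝ᵥ (((A (σ k))ᵀ * S (σ k) * A (σ k)) *ᵥ η k) := by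
      rw [← mulVec_dotProduct_mulVec_mulVec, ← hdyn]
      exact dotProduct_mulVec_le_sum_smul_of_isMin (hπ · (σ k)) (hcol (σ k)) (hσ (k + 1))
    have hgapk := hεle (σ k) (η k)
    rw [sub_mulVec, dotProduct_sub] at hgapk
    linarith
  have hq := tendsto_zero_of_add_le_of_nonneg hV
    (fun k => mul_nonneg hε.le (dotProduct_self_star_nonneg (η k))) hdecr
  exact tendsto_zero_of_dotProduct_self_tendsto_zero (by simpa [hε.ne'] using hq.const_mul ε⁻¹)
end

section
/- For block-diagonal matrices A_j = diag(A¹_{δ(1,j)},…,A^N_{δ(N,j)}), P_i = diag(P¹_{δ(1,i)},…,P^N_{δ(N,i)}) and Q = diag(Q¹,…,Q^N) with δ(n,i) = 1 iff n = i, and with Π having π_{ij} = p_i for all j ≠ i and π_{ii} = m_i, the Lyapunov–Metzler inequality A_jᵀ(∑_i π_{ij}P_i)A_j − P_j + Q ≺ 0 holds for all j if and only if for every i: (A^i_1)ᵀ(m_i P^i_1 + (1−m_i)P^i_0)A^i_1 − P^i_1 + Q^i ≺ 0 and (A^i_0)ᵀ(p_i P^i_1 + (1−p_i)P^i_0)A^i_0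 − P^i_0 + Q^i ≺ 0. -/
/-!
Every matrix in the Lyapunov–Metzler inequality for mode `j` is block diagonal, and so is the
combination `∑ i, π i j • P_i`: its `n`-th block is `π n j • P¹_n + (1 - π n j) • P⁰_n`, because
the columns of `Π` sum to one. A block-diagonal matrix is negative definite iff each block is, so
the inequality for mode `j` splits into one condition per block `n`: the `A¹, m` condition when
`n = j` and the `A⁰, p` condition when `n ≠ j`. Since there are at least two modes, every block
occurs both as the diagonal block of some mode and as an off-diagonal block of another one.
-/

open Matrix

namespace Matrix

variable {o : Type*} [DecidableEq o] {m' : o → Type*}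

theorem submatrix_sigmaMk_blockDiagonal' {α : Type*} [Zero α] (M : ∀ i, Matrix (m' i) (m' i) α)
    (i : o) : (blockDiagonal' M).submatrix (Sigma.mk i) (Sigma.mk i) = M i := by
  ext a b
  simp [blockDiagonal'_apply_eq]

theorem sum_smul_blockDiagonal' {ι α : Type*} [Fintype ι] [Ring α] (c : ι → α)
    (M : ι → ∀ i, Matrix (m' i) (m' i) α) :
    ∑ k, c k • blockDiagonal' (M k) = blockDiagonal' fun i => ∑ k, c k • M k i := by
  simp_rw [← blockDiagonal'_smul]
  refine (map_sum (blockDiagonal'AddMonoidHom m' m' α) _ _).symm.trans ?_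
  simp only [blockDiagonal'AddMonoidHom_apply, Finset.sum_fn, Pi.smul_apply]

variable [Fintype o] [∀ i, Fintype (m' i)]

theorem dotProduct_blockDiagonal'_mulVec {α : Type*} [NonUnitalNonAssocSemiring α]
    (M : ∀ i, Matrix (m' i) (m' i) α) (x y : (Σ i, m' i) → α) :
    x ⬝ᵥ (blockDiagonal' M *ᵥ y) = ∑ i, (fun a => x ⟨i, a⟩) ⬝ᵥ (M i *ᵥ fun a => y ⟨i, a⟩) := by
  simp only [dotProduct, mulVec, ← Finset.univ_sigma_univ, Finset.sum_sigma]
  refine Finset.sum_congr rfl fun i _ => Finset.sum_congr rfl fun a _ => ?_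
  rw [Finset.sum_eq_single_of_mem i (Finset.mem_univ _)]
  · simp [blockDiagonal'_apply_eq]
  · intro j _ hj
    simp [blockDiagonal'_apply_ne M a _ (Ne.symm hj)]

theorem posDef_blockDiagonal'_iff {R : Type*} [CommRing R] [PartialOrder R] [StarRing R]
    [StarOrderedRing R] {M : ∀ i, Matrix (m' i) (m' i) R} :
    (blockDiagonal' M).PosDef ↔ ∀ i, (M i).PosDef := by
  refine ⟨fun h i => submatrix_sigmaMk_blockDiagonal' M i ▸ h.submatrix sigma_mk_injective,
    fun h => ?_⟩
  rw [posDef_iff_dotProduct_mulVec]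
  refine ⟨?_, fun x hx => ?_⟩
  · rw [IsHermitian, blockDiagonal'_conjTranspose]
    exact congrArg _ (funext fun i => (h i).1)
  obtain ⟨⟨i, a⟩, hxa⟩ := Function.ne_iff.mp hx
  rw [dotProduct_blockDiagonal'_mulVec]
  refine Finset.sum_pos' (fun j _ => (h j).posSemidef.dotProduct_mulVec_nonneg _)
    ⟨i, Finset.mem_univ _, ?_⟩
  exact (posDef_iff_dotProduct_mulVec.mp (h i)).2 (Function.ne_iff.mpr ⟨a, hxa⟩)

end Matrix

theorem negDef_blockDiagonal'_iff {o : Type*} [Fintype o] [DecidableEq o] {m' : o → Type*}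
    [∀ i, Fintype (m' i)] {M : ∀ i, Matrix (m' i) (m' i) ℝ} :
    NegDef (blockDiagonal' M) ↔ ∀ i, NegDef (M i) := by
  rw [NegDef, ← blockDiagonal'_neg, posDef_blockDiagonal'_iff]
  rfl

theorem Fintype.sum_smul_ite_eq_of_sum_eq_one {ι R M : Type*} [Fintype ι] [DecidableEq ι]
    [Ring R] [AddCommGroup M] [Module R M] {c : ι → R} (hc : ∑ i, c i = 1) (n : ι) (x y : M) :
    ∑ i, c i • (if n = i then x else y) = c n • x + (1 - c n) • y := by
  have h : ∀ i, c i • (if n = i then x else y) = c i • y + if n = i then c i • (x - y) else 0 := by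
    intro i
    split_ifs <;> simp [smul_sub]
  simp only [h, Finset.sum_add_distrib, ← Finset.sum_smul, hc, Finset.sum_ite_eq,
    Finset.mem_univ, if_true]
  rw [smul_sub, sub_smul, one_smul]
  abel

theorem forall_forall_ite_iff {ι : Type*} [DecidableEq ι] [Nontrivial ι] {a b : ι → Prop} :
    (∀ j n, if n = j then a n else b n) ↔ ∀ n, a n ∧ b n := by
  refine ⟨fun h n => ⟨by simpa using h n n, ?_⟩, fun h j n => ?_⟩
  · obtain ⟨j, hj⟩ := exists_ne n
    simpa [Ne.symm hj] using h j n
  · split_ifs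
    exacts [(h n).1, (h n).2]

theorem stmt6_general {N : ℕ} (hN : 2 ≤ N) (d : Fin N → ℕ)
    (A0 A1 P0 P1 Q : (i : Fin N) → Matrix (Fin (d i)) (Fin (d i)) ℝ)
    (m p : Fin N → ℝ)
    (Pm : Fin N → Fin N → ℝ) (hPm : ∀ i j, Pm i j = if i = j then m i else p i)
    (hcol : ∀ j, ∑ i, Pm i j = 1) :
    (∀ j, NegDef
        ((Matrix.blockDiagonal' fun nn => if nn = j then A1 nn else A0 nn)ᵀ *
          (∑ i, Pm i j • Matrix.blockDiagonal' fun nn => if nn = i then P1 nn else P0 nn) *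
          (Matrix.blockDiagonal' fun nn => if nn = j then A1 nn else A0 nn) -
          (Matrix.blockDiagonal' fun nn => if nn = j then P1 nn else P0 nn) +
          Matrix.blockDiagonal' Q)) ↔
    (∀ i, NegDef ((A1 i)ᵀ * (m i • P1 i + (1 - m i) • P0 i) * A1 i - P1 i + Q i) ∧
          NegDef ((A0 i)ᵀ * (p i • P1 i + (1 - p i) • P0 i) * A0 i - P0 i + Q i)) := by
  have : Nontrivial (Fin N) := Fin.nontrivial_iff_two_le.mpr hN
  simp_rw [sum_smul_blockDiagonal', blockDiagonal'_transpose, ← blockDiagonal'_mul,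
    ← blockDiagonal'_sub, ← blockDiagonal'_add, negDef_blockDiagonal'_iff,
    Fintype.sum_smul_ite_eq_of_sum_eq_one (hcol _), ← forall_forall_ite_iff]
  refine forall₂_congr fun j n => ?_
  split_ifs with h
  · subst h
    simp [hPm]
  · simp [hPm, h]

/-- For the block-diagonal structured matrices and Π with π_{ii} = m_i,
π_{ij} = p_i for j ≠ i (columns summing to one), the lumped Lyapunov–Metzler
inequalities are equivalent to the pair of per-subsystem inequalities. -/
theorem stmt6 {N : ℕ} (hN : 2 ≤ N) (d : Fin N → ℕ)
    (A0 A1 P0 P1 Q : (i : Fin N) → Matrix (Fin (d i)) (Fin (d i)) ℝ)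
    (hP0 : ∀ i, (P0 i).PosDef) (hP1 : ∀ i, (P1 i).PosDef)
    (hQ : ∀ i, (Q i).IsSymm)
    (m p : Fin N → ℝ) (hm : ∀ i, m i ∈ Set.Icc (0:ℝ) 1)
    (hp : ∀ i, p i ∈ Set.Icc (0:ℝ) 1)
    (Pm : Fin N → Fin N → ℝ) (hPm : ∀ i j, Pm i j = if i = j then m i else p i)
    (hcol : ∀ j, ∑ i, Pm i j = 1) :
    (∀ j, NegDef
        ((Matrix.blockDiagonal' fun nn => if nn = j then A1 nn else A0 nn)ᵀ *
          (∑ i, Pm i j • Matrix.blockDiagonal' fun nn => if nn = i then P1 nn else P0 nn) *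
          (Matrix.blockDiagonal' fun nn => if nn = j then A1 nn else A0 nn) -
          (Matrix.blockDiagonal' fun nn => if nn = j then P1 nn else P0 nn) +
          Matrix.blockDiagonal' Q)) ↔
    (∀ i, NegDef ((A1 i)ᵀ * (m i • P1 i + (1 - m i) • P0 i) * A1 i - P1 i + Q i) ∧
          NegDef ((A0 i)ᵀ * (p i • P1 i + (1 - p i) • P0 i) * A0 i - P0 i + Q i)) :=
  stmt6_general hN d A0 A1 P0 P1 Q m p Pm hPm hcol
end

section
/- Let V(η, i) = ηᵀ P_i η and suppose the Lyapunov–Metzler inequalities hold (with Q ⪰ 0). Then for any state η ≠ 0 and any mode j, choosing i* = argmin_i (A_j η)ᵀ P_i (A_j η) gives V(A_j η, i*) ≤ ∑_i π_{ij} (A_j η)ᵀ P_i (A_j η) < V(η, j) − ηᵀ Q η, i.e. the minimum of the quadratic Lyapunov functions strictly decreases along the switched trajectory by at least the stage cost. -/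
/-!
Averaging the quadratic forms `v ↦ vᵀ P_i v` at `v = A_j η` with the weights `π_{ij}` gives a
value at least their minimum, and this average is exactly `ηᵀ A_jᵀ (∑_i π_{ij} P_i) A_j η`,
which the Lyapunov–Metzler inequality bounds strictly by `ηᵀ P_j η − ηᵀ Q η` when `η ≠ 0`.
-/

open Matrix

theorem Finset.le_sum_mul_of_sum_eq_one {ι R : Type*} [Semiring R] [PartialOrder R]
    [IsOrderedRing R] {s : Finset ι} {w v : ι → R} {c : R} (hw : ∀ i ∈ s, 0 ≤ w i)
    (hw_sum : ∑ i ∈ s, w i = 1) (hc : ∀ i ∈ s, c ≤ v i) :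
    c ≤ ∑ i ∈ s, w i * v i :=
  calc c = ∑ i ∈ s, w i * c := by rw [← Finset.sum_mul, hw_sum, one_mul]
    _ ≤ ∑ i ∈ s, w i * v i :=
      Finset.sum_le_sum fun i hi => mul_le_mul_of_nonneg_left (hc i hi) (hw i hi)

namespace Matrix

variable {m n ι R : Type*} [Fintype m] [Fintype n] [CommSemiring R]

theorem dotProduct_transpose_mul_mul_mulVec (A : Matrix m n R) (B : Matrix m m R) (x : n → R) :
    x ⬝ᵥ ((Aᵀ * B * A) *ᵥ x) = (A *ᵥ x) ⬝ᵥ (B *ᵥ (A *ᵥ x)) := by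
  rw [Matrix.mul_assoc, ← mulVec_mulVec, ← mulVec_mulVec, dotProduct_transpose_mulVec,
    dotProduct_comm]

theorem dotProduct_sum_smul_mulVec_s12 (s : Finset ι) (w : ι → R) (P : ι → Matrix n n R)
    (x : n → R) :
    x ⬝ᵥ ((∑ i ∈ s, w i • P i) *ᵥ x) = ∑ i ∈ s, w i * (x ⬝ᵥ (P i *ᵥ x)) := by
  simp only [sum_mulVec, smul_mulVec, dotProduct_sum, dotProduct_smul, smul_eq_mul]

end Matrix

theorem NegDef.dotProduct_mulVec_neg {ι : Type*} [Fintype ι] {M : Matrix ι ι ℝ} (hM : NegDef M)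
    {x : ι → ℝ} (hx : x ≠ 0) : x ⬝ᵥ (M *ᵥ x) < 0 := by
  have h := hM.dotProduct_mulVec_pos hx
  rw [star_trivial, neg_mulVec, dotProduct_neg] at h
  linarith

theorem stmt12_general {n M : ℕ} (A P : Fin M → Matrix (Fin n) (Fin n) ℝ)
    (Pm : Fin M → Fin M → ℝ)
    (hπ : ∀ i j, 0 ≤ Pm i j) (hcol : ∀ j, ∑ i, Pm i j = 1)
    (Q : Matrix (Fin n) (Fin n) ℝ)
    (hLM : ∀ j, NegDef ((A j)ᵀ * (∑ i, Pm i j • P i) * A j - P j + Q))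
    (η : Fin n → ℝ) (hη : η ≠ 0) (j : Fin M) (istar : Fin M)
    (histar : ∀ i, (A j *ᵥ η) ⬝ᵥ (P istar *ᵥ (A j *ᵥ η))
        ≤ (A j *ᵥ η) ⬝ᵥ (P i *ᵥ (A j *ᵥ η))) :
    (A j *ᵥ η) ⬝ᵥ (P istar *ᵥ (A j *ᵥ η))
        ≤ ∑ i, Pm i j * ((A j *ᵥ η) ⬝ᵥ (P i *ᵥ (A j *ᵥ η))) ∧
    ∑ i, Pm i j * ((A j *ᵥ η) ⬝ᵥ (P i *ᵥ (A j *ᵥ η)))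
        < η ⬝ᵥ (P j *ᵥ η) - η ⬝ᵥ (Q *ᵥ η) := by
  refine ⟨Finset.le_sum_mul_of_sum_eq_one (fun i _ => hπ i j) (hcol j) fun i _ => histar i, ?_⟩
  have hdecrease := (hLM j).dotProduct_mulVec_neg hη
  rw [add_mulVec, sub_mulVec, dotProduct_add, dotProduct_sub,
    dotProduct_transpose_mul_mul_mulVec, dotProduct_sum_smul_mulVec_s12] at hdecrease
  linarith

/-- Strict decrease of the min of the quadratic Lyapunov functions along the
switched trajectory, by at least the stage cost. -/
theorem stmt12 {n M : ℕ} (A P : Fin M → Matrix (Fin n) (Fin n) ℝ)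
    (hP : ∀ i, (P i).PosDef) (Pm : Fin M → Fin M → ℝ)
    (hπ : ∀ i j, 0 ≤ Pm i j) (hcol : ∀ j, ∑ i, Pm i j = 1)
    (Q : Matrix (Fin n) (Fin n) ℝ) (hQ : Q.PosSemidef)
    (hLM : ∀ j, NegDef ((A j)ᵀ * (∑ i, Pm i j • P i) * A j - P j + Q))
    (η : Fin n → ℝ) (hη : η ≠ 0) (j : Fin M) (istar : Fin M)
    (histar : ∀ i, (A j *ᵥ η) ⬝ᵥ (P istar *ᵥ (A j *ᵥ η))
        ≤ (A j *ᵥ η) ⬝ᵥ (P i *ᵥ (A j *ᵥ η))) :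
    (A j *ᵥ η) ⬝ᵥ (P istar *ᵥ (A j *ᵥ η))
        ≤ ∑ i, Pm i j * ((A j *ᵥ η) ⬝ᵥ (P i *ᵥ (A j *ᵥ η))) ∧
    ∑ i, Pm i j * ((A j *ᵥ η) ⬝ᵥ (P i *ᵥ (A j *ᵥ η)))
        < η ⬝ᵥ (P j *ᵥ η) - η ⬝ᵥ (Q *ᵥ η) :=
  stmt12_general A P Pm hπ hcol Q hLM η hη j istar histar
end
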